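/- arXiv:2105.11100 — 3 statements merged into one kernel-verified Lean document; each statement's English description precedes it below -/
import Mathlib

section
/- Let F be a symplectic C¹ diffeomorphism of ℝ⁴ (for Ω(v₁,v₂)=v₁ᵀJv₂), K : 𝕋 → ℝ⁴ a C¹ invariant circle with F(K(θ)) = K(θ+ω) and DK(θ) ≠ 0, v_s and v_u stable/unstable bundles satisfying DF(K(θ))v_s(θ) = λs(θ)v_s(θ+ω), DF(K(θ))v_u(θ) = λu(θ)v_u(θ+ω) with sup|λs|<1 and inf|λu|>1. Suppose A, B, C, D : 𝕋 → ℝ satisfy DF(K(θ)) [J⁻¹DK(θ)/‖DK(θ)‖²] = A(θ)DK(θ+ω) + B(θ)J⁻¹DK(θ+ω)/‖DK(θ+ω)‖² + C(θ)v_s(θ+ω) + D(θ)v_u(θ+ω). Then B(θ) = 1 for all θ. -/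
/-!
Pair everything with `DK(θ+ω)` through `Ω`. Symplecticity and `DF(K θ) DK(θ) = DK(θ+ω)` turn
`g(θ) = Ω(DK(θ), v(θ))` into a cocycle `g(θ) = λ(θ) g(θ+ω)` for `v = v_s, v_u`; a bounded function
obeying such a relation with a uniformly contracting (resp. expanding) `λ` vanishes. In the
decomposition the `A`, `C`, `D` terms then pair to zero, the `B` term to `B(θ)`, and the left side,
by symplecticity again, to `Ω(DK(θ), J⁻¹DK(θ)/‖DK(θ)‖²) = 1`.
-/

open scoped Real
open Matrix

/-- The standard `4×4` symplectic matrix `J = [[0, I₂],[−I₂, 0]]`. -/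
def J4 : Matrix (Fin 4) (Fin 4) ℝ :=
  !![0, 0, 1, 0; 0, 0, 0, 1; -1, 0, 0, 0; 0, -1, 0, 0]

theorem J4_mul_neg_J4 : J4 * -J4 = 1 := by
  ext i j
  fin_cases i <;> fin_cases j <;> simp [J4, Matrix.mul_apply, Fin.sum_univ_four]

theorem J4_inv : J4⁻¹ = -J4 :=
  Matrix.inv_eq_right_inv J4_mul_neg_J4

theorem J4_mulVec_J4_inv_mulVec (w : Fin 4 → ℝ) : J4 *ᵥ (J4⁻¹ *ᵥ w) = w := by
  rw [J4_inv, mulVec_mulVec, J4_mul_neg_J4, one_mulVec]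

theorem dotProduct_J4_mulVec_self (v : Fin 4 → ℝ) : v ⬝ᵥ J4 *ᵥ v = 0 := by
  simp [J4, mulVec, dotProduct, Fin.sum_univ_four, mul_comm]

theorem Function.Periodic.bddAbove_range_of_continuous {α : Type*} [LinearOrder α]
    [TopologicalSpace α] [ClosedIciTopology α] [Nonempty α] {f : ℝ → α} {c : ℝ}
    (hp : Function.Periodic f c) (hc : c ≠ 0) (hf : Continuous f) : BddAbove (Set.range f) :=
  (hp.compact_of_continuous hc hf).bddAbove

theorem eq_zero_of_abs_le_mul_abs_comp {α : Type*} {g : α → ℝ} {c : ℝ} (T : α → α)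
    (hg : BddAbove (Set.range fun x => |g x|)) (hc₀ : 0 ≤ c) (hc₁ : c < 1)
    (h : ∀ x, |g x| ≤ c * |g (T x)|) (x : α) : g x = 0 := by
  have : Nonempty α := ⟨x⟩
  set S := ⨆ y, |g y|
  have hS : S ≤ c * S := ciSup_le fun y =>
    (h y).trans (mul_le_mul_of_nonneg_left (le_ciSup hg (T y)) hc₀)
  have hgx : |g x| ≤ S := le_ciSup hg x
  exact abs_nonpos_iff.mp (by nlinarith [abs_nonneg (g x)])

theorem eq_zero_of_eq_mul_comp_add_of_contracting {G : Type*} [Add G] {g lam : G → ℝ} {ω : G}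
    (hg : BddAbove (Set.range fun x => |g x|)) (hlam : BddAbove (Set.range fun x => |lam x|))
    (hlam₁ : ⨆ x, |lam x| < 1) (hrec : ∀ x, g x = lam x * g (x + ω)) (x : G) : g x = 0 := by
  refine eq_zero_of_abs_le_mul_abs_comp (· + ω) hg ?_ hlam₁ (fun y => ?_) x
  · exact (abs_nonneg (lam x)).trans (le_ciSup hlam x)
  · rw [hrec y, abs_mul]
    exact mul_le_mul_of_nonneg_right (le_ciSup hlam y) (abs_nonneg _)

theorem eq_zero_of_eq_mul_comp_add_of_expanding {G : Type*} [AddGroup G] {g lam : G → ℝ} {ω : G}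
    (hg : BddAbove (Set.range fun x => |g x|)) (hlam₁ : 1 < ⨅ x, |lam x|)
    (hrec : ∀ x, g x = lam x * g (x + ω)) (x : G) : g x = 0 := by
  set L := ⨅ x, |lam x|
  have hL : ∀ y, L ≤ |lam y| := ciInf_le ⟨0, Set.forall_mem_range.mpr fun y => abs_nonneg _⟩
  refine eq_zero_of_abs_le_mul_abs_comp (· - ω) hg (by positivity) (inv_lt_one_of_one_lt₀ hlam₁)
    (fun y => ?_) x
  rw [hrec (y - ω), sub_add_cancel, abs_mul, ← div_eq_inv_mul, le_div_iff₀ (by linarith), mul_comm]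
  exact mul_le_mul_of_nonneg_right (hL _) (abs_nonneg _)

section InvariantCircle

variable {n : Type*} [Fintype n] {F : (n → ℝ) → (n → ℝ)} {K : ℝ → n → ℝ} {ω : ℝ}

theorem fderiv_apply_deriv_of_invariant (hF : Differentiable ℝ F) (hK : Differentiable ℝ K)
    (hinv : ∀ θ, F (K θ) = K (θ + ω)) (θ : ℝ) :
    fderiv ℝ F (K θ) (deriv K θ) = deriv K (θ + ω) := by
  have hcomp : HasDerivAt (F ∘ K) (fderiv ℝ F (K θ) (deriv K θ)) θ :=
    (hF (K θ)).hasFDerivAt.comp_hasDerivAt θ (hK θ).hasDerivAt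
  rw [show F ∘ K = fun t => K (t + ω) from funext hinv] at hcomp
  exact hcomp.unique ((hK (θ + ω)).hasDerivAt.comp_add_const θ ω)

theorem pairing_deriv_add_fderiv_apply {J : Matrix n n ℝ}
    (hsymp : ∀ x v₁ v₂, fderiv ℝ F x v₁ ⬝ᵥ J *ᵥ fderiv ℝ F x v₂ = v₁ ⬝ᵥ J *ᵥ v₂)
    (hchain : ∀ θ, fderiv ℝ F (K θ) (deriv K θ) = deriv K (θ + ω)) (θ : ℝ) (w : n → ℝ) :
    deriv K (θ + ω) ⬝ᵥ J *ᵥ fderiv ℝ F (K θ) w = deriv K θ ⬝ᵥ J *ᵥ w := by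
  rw [← hchain, hsymp]

theorem pairing_deriv_eq_mul_pairing_deriv_add {J : Matrix n n ℝ}
    (hsymp : ∀ x v₁ v₂, fderiv ℝ F x v₁ ⬝ᵥ J *ᵥ fderiv ℝ F x v₂ = v₁ ⬝ᵥ J *ᵥ v₂)
    (hchain : ∀ θ, fderiv ℝ F (K θ) (deriv K θ) = deriv K (θ + ω))
    {v : ℝ → n → ℝ} {lam : ℝ → ℝ} (hv : ∀ θ, fderiv ℝ F (K θ) (v θ) = lam θ • v (θ + ω))
    (θ : ℝ) : deriv K θ ⬝ᵥ J *ᵥ v θ = lam θ * (deriv K (θ + ω) ⬝ᵥ J *ᵥ v (θ + ω)) := by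
  rw [← pairing_deriv_add_fderiv_apply hsymp hchain, hv, mulVec_smul, dotProduct_smul, smul_eq_mul]

theorem bddAbove_range_abs_pairing_deriv {J : Matrix n n ℝ} {c : ℝ} (hc : c ≠ 0)
    (hK : ContDiff ℝ 1 K) (hKper : Function.Periodic K c)
    {v : ℝ → n → ℝ} (hvc : Continuous v) (hvper : Function.Periodic v c) :
    BddAbove (Set.range fun θ => |deriv K θ ⬝ᵥ J *ᵥ v θ|) := by
  have hdKper : Function.Periodic (deriv K) c := fun θ => by
    rw [← deriv_comp_add_const, show (fun t => K (t + c)) = K from funext hKper]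
  refine Function.Periodic.bddAbove_range_of_continuous (fun θ => ?_) hc ?_
  · simp only [hdKper θ, hvper θ]
  · exact ((hK.continuous_deriv le_rfl).dotProduct
      (continuous_const.matrix_mulVec hvc)).abs

end InvariantCircle

theorem stmt7_general (ω : ℝ)
    (F : (Fin 4 → ℝ) → (Fin 4 → ℝ)) (hF : ContDiff ℝ 1 F)
    (hsymp : ∀ (x v₁ v₂ : Fin 4 → ℝ),
      (fderiv ℝ F x v₁) ⬝ᵥ J4.mulVec (fderiv ℝ F x v₂) = v₁ ⬝ᵥ J4.mulVec v₂)
    (K : ℝ → (Fin 4 → ℝ)) (hK : ContDiff ℝ 1 K)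
    (hKper : Function.Periodic K (2 * Real.pi))
    (hinv : ∀ θ, F (K θ) = K (θ + ω))
    (hDK : ∀ θ, deriv K θ ≠ 0)
    (vs : ℝ → (Fin 4 → ℝ)) (hvsc : Continuous vs)
    (hvsper : Function.Periodic vs (2 * Real.pi))
    (lams : ℝ → ℝ) (hlamsc : Continuous lams)
    (hlamsper : Function.Periodic lams (2 * Real.pi))
    (hvs : ∀ θ, fderiv ℝ F (K θ) (vs θ) = lams θ • vs (θ + ω))
    (hL : (⨆ θ : ℝ, |lams θ|) < 1)
    (vu : ℝ → (Fin 4 → ℝ)) (hvuc : Continuous vu)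
    (hvuper : Function.Periodic vu (2 * Real.pi))
    (lamu : ℝ → ℝ)
    (hvu : ∀ θ, fderiv ℝ F (K θ) (vu θ) = lamu θ • vu (θ + ω))
    (hLu : 1 < ⨅ θ : ℝ, |lamu θ|)
    (A B Cf Df : ℝ → ℝ)
    (hdecomp : ∀ θ,
      fderiv ℝ F (K θ) ((deriv K θ ⬝ᵥ deriv K θ)⁻¹ • (J4⁻¹.mulVec (deriv K θ)))
        = A θ • deriv K (θ + ω)
          + B θ • ((deriv K (θ + ω) ⬝ᵥ deriv K (θ + ω))⁻¹ • (J4⁻¹.mulVec (deriv K (θ + ω))))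
          + Cf θ • vs (θ + ω) + Df θ • vu (θ + ω)) :
    ∀ θ, B θ = 1 := by
  have h2π : 2 * π ≠ 0 := by positivity
  have hchain := fderiv_apply_deriv_of_invariant (hF.differentiable one_ne_zero)
    (hK.differentiable one_ne_zero) hinv
  have hstable : ∀ θ, deriv K θ ⬝ᵥ J4 *ᵥ vs θ = 0 :=
    eq_zero_of_eq_mul_comp_add_of_contracting
      (bddAbove_range_abs_pairing_deriv h2π hK hKper hvsc hvsper)
      ((hlamsper.comp abs).bddAbove_range_of_continuous h2π hlamsc.abs) hL
      (pairing_deriv_eq_mul_pairing_deriv_add hsymp hchain hvs)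
  have hunstable : ∀ θ, deriv K θ ⬝ᵥ J4 *ᵥ vu θ = 0 :=
    eq_zero_of_eq_mul_comp_add_of_expanding
      (bddAbove_range_abs_pairing_deriv h2π hK hKper hvuc hvuper) hLu
      (pairing_deriv_eq_mul_pairing_deriv_add hsymp hchain hvu)
  have hnorm : ∀ θ, deriv K θ ⬝ᵥ deriv K θ ≠ 0 := fun θ => mt dotProduct_self_eq_zero.mp (hDK θ)
  intro θ
  have hpair := congrArg (deriv K (θ + ω) ⬝ᵥ J4 *ᵥ ·) (hdecomp θ)
  rw [pairing_deriv_add_fderiv_apply hsymp hchain] at hpair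
  simpa only [mulVec_add, mulVec_smul, dotProduct_add, dotProduct_smul, J4_mulVec_J4_inv_mulVec,
    inv_mul_cancel₀ (hnorm _), dotProduct_J4_mulVec_self, hstable, hunstable, smul_eq_mul, mul_zero, mul_one, zero_add, add_zero, eq_comm] using hpair

/-- in the decomposition
`DF(K(θ))[J⁻¹DK(θ)/‖DK(θ)‖²] = A DK(θ+ω) + B J⁻¹DK(θ+ω)/‖DK(θ+ω)‖² + C v_s(θ+ω) + D v_u(θ+ω)`,
the coefficient `B` is identically `1` (here `‖DK‖² = DK ⬝ᵥ DK`). -/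
theorem stmt7 (ω : ℝ)
    (F : (Fin 4 → ℝ) → (Fin 4 → ℝ)) (hF : ContDiff ℝ 1 F) (hFbij : Function.Bijective F)
    (hsymp : ∀ (x v₁ v₂ : Fin 4 → ℝ),
      (fderiv ℝ F x v₁) ⬝ᵥ J4.mulVec (fderiv ℝ F x v₂) = v₁ ⬝ᵥ J4.mulVec v₂)
    (K : ℝ → (Fin 4 → ℝ)) (hK : ContDiff ℝ 1 K)
    (hKper : Function.Periodic K (2 * Real.pi))
    (hinv : ∀ θ, F (K θ) = K (θ + ω))
    (hDK : ∀ θ, deriv K θ ≠ 0)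
    (vs : ℝ → (Fin 4 → ℝ)) (hvsc : Continuous vs)
    (hvsper : Function.Periodic vs (2 * Real.pi))
    (lams : ℝ → ℝ) (hlamsc : Continuous lams)
    (hlamsper : Function.Periodic lams (2 * Real.pi))
    (hvs : ∀ θ, fderiv ℝ F (K θ) (vs θ) = lams θ • vs (θ + ω))
    (hL : (⨆ θ : ℝ, |lams θ|) < 1)
    (vu : ℝ → (Fin 4 → ℝ)) (hvuc : Continuous vu)
    (hvuper : Function.Periodic vu (2 * Real.pi))
    (lamu : ℝ → ℝ) (hlamuc : Continuous lamu)
    (hlamuper : Function.Periodic lamu (2 * Real.pi))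
    (hvu : ∀ θ, fderiv ℝ F (K θ) (vu θ) = lamu θ • vu (θ + ω))
    (hLu : 1 < ⨅ θ : ℝ, |lamu θ|)
    (A B Cf Df : ℝ → ℝ)
    (hdecomp : ∀ θ,
      fderiv ℝ F (K θ) ((deriv K θ ⬝ᵥ deriv K θ)⁻¹ • (J4⁻¹.mulVec (deriv K θ)))
        = A θ • deriv K (θ + ω)
          + B θ • ((deriv K (θ + ω) ⬝ᵥ deriv K (θ + ω))⁻¹ • (J4⁻¹.mulVec (deriv K (θ + ω))))
          + Cf θ • vs (θ + ω) + Df θ • vu (θ + ω)) :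
    ∀ θ, B θ = 1 :=
  stmt7_general ω F hF hsymp K hK hKper hinv hDK vs hvsc hvsper lams hlamsc hlamsper hvs hL vu hvuc
    hvuper lamu hvu hLu A B Cf Df hdecomp
end

section
/- Let λ ∈ ℝ with |λ| > 1 (unstable case), k ≥ 2, and the same setup as the stable case with λ = λu, |λs| < 1 < |λu|, DF(K(θ))P(θ) = P(θ+ω)Λ. The sequence W_{k,0} = 0, W_{k,i+1}(θ) = λ^{−k} DF(K(θ−ω)) W_{k,i}(θ−ω) + λ^{−k} E_k(θ−ω) converges uniformly to a continuous W_k satisfying DF(K(θ)) W_k(θ) − λ^k W_k(θ+ω) = −E_k(θ). -/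
/-!
The reducibility `DF(K θ) P θ = P (θ + ω) Λ` telescopes the products of `DF` along the orbit,
so the `i`-th iterate is the partial sum of `∑ⱼ λ^{-k(j+1)} P θ Λ^j P(θ - jω)⁻¹ E_k(θ - (j+1)ω)`.
As `‖Λ^j‖ ≤ 1 + j|T| + |λs|^j + |λu|^j` and `|λu|^{1-k} < 1`, the series converges normally
(Weierstrass M-test), so the limit is continuous, and passing to the limit in the recursion
gives the cohomological equation.
-/

open scoped Real
open Matrix Filter Topology Function

attribute [local instance] Matrix.linftyOpNormedRing Matrix.linftyOpNormedAlgebra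

theorem Function.Periodic.exists_forall_norm_le {E : Type*} [SeminormedAddCommGroup E]
    {f : ℝ → E} {c : ℝ} (hp : Periodic f c) (hc : c ≠ 0) (hf : Continuous f) :
    ∃ C, ∀ θ, ‖f θ‖ ≤ C := by
  obtain ⟨C, hC⟩ := isBounded_iff_forall_norm_le.1 (hp.isBounded_of_continuous hc hf)
  exact ⟨C, fun θ => hC _ ⟨θ, rfl⟩⟩

theorem Continuous.matrix_inv_of_isUnit_det {X n 𝕜 : Type*} [TopologicalSpace X] [Fintype n]
    [DecidableEq n] [NormedField 𝕜] [CompleteSpace 𝕜] {A : X → Matrix n n 𝕜}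
    (hA : Continuous A) (hdet : ∀ x, IsUnit (A x).det) : Continuous fun x => (A x)⁻¹ :=
  continuous_iff_continuousAt.2 fun x =>
    (continuousAt_matrix_inv _ (NormedRing.inverse_continuousAt (hdet x).unit)).comp
      hA.continuousAt

theorem normalForm_pow (T a b : ℝ) (j : ℕ) :
    (!![1, T, 0, 0; 0, 1, 0, 0; 0, 0, a, 0; 0, 0, 0, b] : Matrix (Fin 4) (Fin 4) ℝ) ^ j
      = !![1, j * T, 0, 0; 0, 1, 0, 0; 0, 0, a ^ j, 0; 0, 0, 0, b ^ j] := by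
  induction j with
  | zero =>
    ext i j
    fin_cases i <;> fin_cases j <;> simp [one_apply]
  | succ j ih =>
    rw [pow_succ, ih]
    ext i j
    fin_cases i <;> fin_cases j <;> simp [mul_apply, Fin.sum_univ_four, pow_succ]; ring

theorem norm_normalForm_pow_le (T a b : ℝ) (j : ℕ) :
    ‖(!![1, T, 0, 0; 0, 1, 0, 0; 0, 0, a, 0; 0, 0, 0, b] : Matrix (Fin 4) (Fin 4) ℝ) ^ j‖
      ≤ 1 + j * |T| + |a| ^ j + |b| ^ j := by
  have hT : (0 : ℝ) ≤ j * |T| := by positivity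
  have ha : (0 : ℝ) ≤ |a| ^ j := by positivity
  have hb : (0 : ℝ) ≤ |b| ^ j := by positivity
  have hB : (0 : ℝ) ≤ 1 + j * |T| + |a| ^ j + |b| ^ j := by positivity
  rw [normalForm_pow, linfty_opNorm_def, ← Real.coe_toNNReal _ hB, NNReal.coe_le_coe]
  refine Finset.sup_le fun i _ => ?_
  rw [← NNReal.coe_le_coe, NNReal.coe_sum, Real.coe_toNNReal _ hB]
  fin_cases i <;> simp [Fin.sum_univ_four, abs_mul, abs_pow] <;> linarith

theorem summable_geometric_mul_normalForm_bound (T : ℝ) {r a b : ℝ} (hr₀ : 0 ≤ r) (hr : r < 1)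
    (ha : r * |a| < 1) (hb : r * |b| < 1) :
    Summable fun j : ℕ => r ^ j * (1 + j * |T| + |a| ^ j + |b| ^ j) := by
  have h₁ := summable_geometric_of_lt_one hr₀ hr
  have h₂ := (summable_pow_mul_geometric_of_norm_lt_one 1
    (by rwa [Real.norm_of_nonneg hr₀])).mul_left |T|
  have h₃ := summable_geometric_of_lt_one (by positivity) ha
  have h₄ := summable_geometric_of_lt_one (by positivity) hb
  refine (((h₁.add h₂).add h₃).add h₄).congr fun j => ?_
  simp only [mul_pow, pow_one]
  ring

theorem summable_inv_pow_mul_normalForm_bound (T : ℝ) {a b : ℝ} {k : ℕ} (hk : 2 ≤ k)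
    (ha : |a| < 1) (hb : 1 < |b|) :
    Summable fun j : ℕ => ‖(b ^ k)⁻¹‖ ^ j * (1 + j * |T| + |a| ^ j + |b| ^ j) := by
  have hbk : 0 < |b| ^ k := pow_pos (one_pos.trans hb) k
  have hr : ‖(b ^ k)⁻¹‖ = (|b| ^ k)⁻¹ := by rw [norm_inv, norm_pow, Real.norm_eq_abs]
  have hbk₁ : |b| < |b| ^ k := by simpa using pow_lt_pow_right₀ hb (by omega : 1 < k)
  rw [hr]
  refine summable_geometric_mul_normalForm_bound T (inv_pos.2 hbk).le ?_ ?_ ?_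
  · exact inv_lt_one_of_one_lt₀ (hb.trans hbk₁)
  · rw [inv_mul_lt_iff₀ hbk, mul_one]
    nlinarith [abs_nonneg a]
  · rwa [inv_mul_lt_iff₀ hbk, mul_one]

section Iteration

variable {G n R : Type*} [AddCommGroup G] [Fintype n] [DecidableEq n]

noncomputable def iterateTerm [CommRing R] (ω : G) (c : R) (P : G → Matrix n n R) (Λ : Matrix n n R)
    (E : G → n → R) (j : ℕ) (θ : G) : n → R :=
  c ^ (j + 1) • (P θ * Λ ^ j * (P (θ - j • ω))⁻¹) *ᵥ E (θ - (j + 1) • ω)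

variable [CommRing R] {ω : G} {c : R} {A P : G → Matrix n n R} {Λ : Matrix n n R} {E : G → n → R}

theorem iterateTerm_zero (hP : ∀ θ, IsUnit (P θ).det) (θ : G) :
    iterateTerm ω c P Λ E 0 θ = c • E (θ - ω) := by
  simp [iterateTerm, mul_nonsing_inv _ (hP θ)]

theorem smul_mulVec_iterateTerm (hAP : ∀ θ, A θ * P θ = P (θ + ω) * Λ) (j : ℕ) (θ : G) :
    c • A (θ - ω) *ᵥ iterateTerm ω c P Λ E j (θ - ω) = iterateTerm ω c P Λ E (j + 1) θ := by
  have hA : A (θ - ω) * P (θ - ω) = P θ * Λ := by rw [hAP, sub_add_cancel]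
  simp only [iterateTerm, mulVec_smul, mulVec_mulVec, smul_smul, ← pow_succ', sub_sub,
    ← succ_nsmul']
  rw [← Matrix.mul_assoc, ← Matrix.mul_assoc, hA, Matrix.mul_assoc (P θ), ← pow_succ']

theorem iterate_eq_sum_iterateTerm (hP : ∀ θ, IsUnit (P θ).det)
    (hAP : ∀ θ, A θ * P θ = P (θ + ω) * Λ) {W : ℕ → G → n → R} (hW₀ : ∀ θ, W 0 θ = 0)
    (hW : ∀ i θ, W (i + 1) θ = c • A (θ - ω) *ᵥ W i (θ - ω) + c • E (θ - ω)) (i : ℕ) (θ : G) :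
    W i θ = ∑ j ∈ Finset.range i, iterateTerm ω c P Λ E j θ := by
  induction i generalizing θ with
  | zero => simp [hW₀]
  | succ i ih =>
    rw [hW, ih, Finset.sum_range_succ', mulVec_sum, Finset.smul_sum, iterateTerm_zero hP]
    simp only [smul_mulVec_iterateTerm hAP]

end Iteration

section Normed

variable {G n 𝕜 : Type*} [AddCommGroup G] [Fintype n] [DecidableEq n] [NormedField 𝕜]
  {ω : G} {c : 𝕜} {A P : G → Matrix n n 𝕜} {Λ : Matrix n n 𝕜} {E : G → n → 𝕜}

theorem norm_iterateTerm_le {cP cQ cE : ℝ} {B : ℕ → ℝ} (hP : ∀ θ, ‖P θ‖ ≤ cP)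
    (hQ : ∀ θ, ‖(P θ)⁻¹‖ ≤ cQ) (hE : ∀ θ, ‖E θ‖ ≤ cE) (hΛ : ∀ j, ‖Λ ^ j‖ ≤ B j) (j : ℕ) (θ : G) :
    ‖iterateTerm ω c P Λ E j θ‖ ≤ ‖c‖ * (cP * cQ * cE) * (‖c‖ ^ j * B j) := by
  have hcP : 0 ≤ cP := (norm_nonneg _).trans (hP 0)
  have hcQ : 0 ≤ cQ := (norm_nonneg _).trans (hQ 0)
  have hcE : 0 ≤ cE := (norm_nonneg _).trans (hE 0)
  have hB : 0 ≤ B j := (norm_nonneg _).trans (hΛ j)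
  have hM : ‖(P θ * Λ ^ j * (P (θ - j • ω))⁻¹) *ᵥ E (θ - (j + 1) • ω)‖ ≤ cP * B j * cQ * cE :=
    calc _ ≤ ‖P θ * Λ ^ j * (P (θ - j • ω))⁻¹‖ * ‖E (θ - (j + 1) • ω)‖ :=
          linfty_opNorm_mulVec _ _
      _ ≤ ‖P θ‖ * ‖Λ ^ j‖ * ‖(P (θ - j • ω))⁻¹‖ * ‖E (θ - (j + 1) • ω)‖ := by
          gcongr; exact norm_mul₃_le
      _ ≤ cP * B j * cQ * cE := by gcongr; exacts [hP θ, hΛ j, hQ _, hE _]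
  calc ‖iterateTerm ω c P Λ E j θ‖ ≤ ‖c‖ ^ (j + 1) * (cP * B j * cQ * cE) := by
        rw [iterateTerm, norm_smul, norm_pow]; gcongr
    _ = ‖c‖ * (cP * cQ * cE) * (‖c‖ ^ j * B j) := by ring

theorem continuous_iterateTerm [TopologicalSpace G] [IsTopologicalAddGroup G] [CompleteSpace 𝕜]
    (hPc : Continuous P) (hP : ∀ θ, IsUnit (P θ).det) (hE : Continuous E) (j : ℕ) :
    Continuous (iterateTerm ω c P Λ E j) := by
  have hQ := (hPc.matrix_inv_of_isUnit_det hP).comp (continuous_sub_right (j • ω))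
  exact (((hPc.mul continuous_const).mul hQ).matrix_mulVec
    (hE.comp (continuous_sub_right _))).const_smul (c ^ (j + 1))

omit [DecidableEq n] in
theorem mulVec_sub_smul_eq_neg_of_tendsto {μ : 𝕜} (hμ : μ ≠ 0) {W : ℕ → G → n → 𝕜}
    (hW : ∀ i θ, W (i + 1) θ = μ⁻¹ • A (θ - ω) *ᵥ W i (θ - ω) + μ⁻¹ • E (θ - ω))
    {V : G → n → 𝕜} (hV : ∀ θ, Tendsto (fun i => W i θ) atTop (𝓝 (V θ))) (θ : G) :
    A θ *ᵥ V θ - μ • V (θ + ω) = -E θ := by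
  have hlim : Tendsto (fun i => W (i + 1) (θ + ω)) atTop (𝓝 (μ⁻¹ • A θ *ᵥ V θ + μ⁻¹ • E θ)) := by
    simp only [hW, add_sub_cancel_right]
    have hAV : Tendsto (fun i => A θ *ᵥ W i θ) atTop (𝓝 (A θ *ᵥ V θ)) :=
      ((continuous_const.matrix_mulVec continuous_id).tendsto (V θ)).comp (hV θ)
    exact (hAV.const_smul μ⁻¹).add tendsto_const_nhds
  rw [tendsto_nhds_unique ((hV (θ + ω)).comp (tendsto_add_atTop_nat 1)) hlim, smul_add,
    smul_inv_smul₀ hμ, smul_inv_smul₀ hμ]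
  abel

end Normed

theorem stmt11_general (ω T lams lamu lam : ℝ) (k : ℕ) (hk : 2 ≤ k)
    (hlam : lam = lamu) (hls : |lams| < 1) (hlu : 1 < |lamu|)
    (DFm : ℝ → Matrix (Fin 4) (Fin 4) ℝ)
    (P : ℝ → Matrix (Fin 4) (Fin 4) ℝ) (hPc : Continuous P)
    (hPper : Function.Periodic P (2 * Real.pi))
    (hPinv : ∀ θ, IsUnit (P θ).det)
    (Λ : Matrix (Fin 4) (Fin 4) ℝ)
    (hΛ : Λ = !![1, T, 0, 0; 0, 1, 0, 0; 0, 0, lams, 0; 0, 0, 0, lamu])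
    (hPΛ : ∀ θ, DFm θ * P θ = P (θ + ω) * Λ)
    (Ek : ℝ → (Fin 4 → ℝ)) (hEkc : Continuous Ek)
    (hEkper : Function.Periodic Ek (2 * Real.pi))
    (W : ℕ → ℝ → (Fin 4 → ℝ)) (hW0 : ∀ θ, W 0 θ = 0)
    (hWrec : ∀ i θ, W (i + 1) θ
      = (lam ^ k)⁻¹ • (DFm (θ - ω)).mulVec (W i (θ - ω))
        + (lam ^ k)⁻¹ • Ek (θ - ω)) :
    ∃ Wk : ℝ → (Fin 4 → ℝ), Continuous Wk ∧
      TendstoUniformly (fun i θ => W i θ) Wk Filter.atTop ∧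
      ∀ θ, (DFm θ).mulVec (Wk θ) - lam ^ k • Wk (θ + ω) = -(Ek θ) := by
  subst hlam
  have hμ : lam ^ k ≠ 0 := pow_ne_zero _ (abs_pos.1 (one_pos.trans hlu))
  obtain ⟨cP, hcP⟩ := hPper.exists_forall_norm_le Real.two_pi_pos.ne' hPc
  obtain ⟨cQ, hcQ⟩ := (hPper.comp Inv.inv).exists_forall_norm_le Real.two_pi_pos.ne'
    (hPc.matrix_inv_of_isUnit_det hPinv)
  obtain ⟨cE, hcE⟩ := hEkper.exists_forall_norm_le Real.two_pi_pos.ne' hEkc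
  have hΛpow : ∀ j : ℕ, ‖Λ ^ j‖ ≤ 1 + j * |T| + |lams| ^ j + |lam| ^ j :=
    hΛ ▸ norm_normalForm_pow_le T lams lam
  have hbound := norm_iterateTerm_le (ω := ω) (c := (lam ^ k)⁻¹) hcP hcQ hcE hΛpow
  have hsum := (summable_inv_pow_mul_normalForm_bound T hk hls hlu).mul_left
    (‖(lam ^ k)⁻¹‖ * (cP * cQ * cE))
  have hTU : TendstoUniformly (fun i θ => W i θ)
      (fun θ => ∑' j, iterateTerm ω (lam ^ k)⁻¹ P Λ Ek j θ) atTop := by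
    simpa only [iterate_eq_sum_iterateTerm hPinv hPΛ hW0 hWrec] using
      tendstoUniformly_tsum_nat hsum hbound
  exact ⟨_, continuous_tsum (continuous_iterateTerm hPc hPinv hEkc) hsum hbound, hTU,
    mulVec_sub_smul_eq_neg_of_tendsto hμ hWrec fun θ => hTU.tendsto_at θ⟩

/-- unstable case `|λ| > 1`, `λ = λu`: the fixed-point iteration
`W_{k,0} = 0`, `W_{k,i+1}(θ) = λ^{−k} DF(K(θ−ω)) W_{k,i}(θ−ω) + λ^{−k} E_k(θ−ω)`
converges uniformly to a continuous `W_k` solving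
`DF(K(θ)) W_k(θ) − λ^k W_k(θ+ω) = −E_k(θ)`. -/
theorem stmt11 (ω T lams lamu lam : ℝ) (k : ℕ) (hk : 2 ≤ k)
    (hlam : lam = lamu) (hls : |lams| < 1) (hlu : 1 < |lamu|)
    (F : (Fin 4 → ℝ) → (Fin 4 → ℝ)) (hF : ContDiff ℝ 1 F)
    (K : ℝ → (Fin 4 → ℝ)) (hKc : Continuous K)
    (hKper : Function.Periodic K (2 * Real.pi))
    (hinv : ∀ θ, F (K θ) = K (θ + ω))
    (DFm : ℝ → Matrix (Fin 4) (Fin 4) ℝ)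
    (hDFm : ∀ θ (v : Fin 4 → ℝ), fderiv ℝ F (K θ) v = (DFm θ).mulVec v)
    (P : ℝ → Matrix (Fin 4) (Fin 4) ℝ) (hPc : Continuous P)
    (hPper : Function.Periodic P (2 * Real.pi))
    (hPinv : ∀ θ, IsUnit (P θ).det)
    (Λ : Matrix (Fin 4) (Fin 4) ℝ)
    (hΛ : Λ = !![1, T, 0, 0; 0, 1, 0, 0; 0, 0, lams, 0; 0, 0, 0, lamu])
    (hPΛ : ∀ θ, DFm θ * P θ = P (θ + ω) * Λ)
    (Ek : ℝ → (Fin 4 → ℝ)) (hEkc : Continuous Ek)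
    (hEkper : Function.Periodic Ek (2 * Real.pi))
    (W : ℕ → ℝ → (Fin 4 → ℝ)) (hW0 : ∀ θ, W 0 θ = 0)
    (hWrec : ∀ i θ, W (i + 1) θ
      = (lam ^ k)⁻¹ • (DFm (θ - ω)).mulVec (W i (θ - ω))
        + (lam ^ k)⁻¹ • Ek (θ - ω)) :
    ∃ Wk : ℝ → (Fin 4 → ℝ), Continuous Wk ∧
      TendstoUniformly (fun i θ => W i θ) Wk Filter.atTop ∧
      ∀ θ, (DFm θ).mulVec (Wk θ) - lam ^ k • Wk (θ + ω) = -(Ek θ) :=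
  stmt11_general ω T lams lamu lam k hk hlam hls hlu DFm P hPc hPper hPinv Λ hΛ hPΛ Ek hEkc hEkper W
    hW0 hWrec
end

section
/- Let F : ℝ⁴ → ℝ⁴ be a C² map, K, P, Λ an approximate solution with errors E(θ) := F(K(θ)) − K(θ+ω) and E_red(θ) := P(θ+ω)⁻¹DF(K(θ))P(θ) − Λ(θ). If ξ : 𝕋 → ℝ⁴ solves −P(θ+ω)⁻¹E(θ) = Λ(θ)ξ(θ) − ξ(θ+ω), then the new error E_new(θ) := F(K(θ)+P(θ)ξ(θ)) − (K(θ+ω)+P(θ+ω)ξ(θ+ω)) satisfies E_new(θ) = P(θ+ω)E_red(θ)ξ(θ) + R(θ) where ‖R(θ)‖ ≤ C‖ξ(θ)‖² for a constant C depending on bounds on D²F and ‖P‖ on a neighborhood of the image of K. In particular, sup‖E_new‖ ≤ sup‖P‖·sup‖E_red‖·sup‖ξ‖ + C sup‖ξ‖². -/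
/-!
Put `v = P ξ`. Multiplying the cohomological equation by `P(θ+ω)` gives
`P(θ+ω) ξ(θ+ω) = P(θ+ω) Λ ξ + E`, while `DF(K) P = P(θ+ω) (Λ + E_red)`; so the new error is
`P(θ+ω) E_red ξ` plus the Taylor remainder `F(K + v) - F(K) - DF(K) v`. Two applications of the
mean value inequality bound that remainder by `M ‖v‖² ≤ M (sup ‖P‖)² ‖ξ‖²`, with `M` a bound of
`D²F` on a ball containing the images of `K` and `K + v`; these, like every function whose
supremum appears, are continuous and `2π`-periodic, hence have compact range.
-/

open scoped Real
open Matrix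

/-- The operator norm of a `4×4` real matrix acting on `Fin 4 → ℝ` by `mulVec`. -/
noncomputable def opNorm (M : Matrix (Fin 4) (Fin 4) ℝ) : ℝ :=
  ‖(LinearMap.toContinuousLinearMap (Matrix.mulVecLin M) :
      (Fin 4 → ℝ) →L[ℝ] (Fin 4 → ℝ))‖

open Set Function Bornology

lemma opNorm_nonneg (M : Matrix (Fin 4) (Fin 4) ℝ) : 0 ≤ opNorm M := norm_nonneg _

lemma norm_mulVec_le_opNorm (M : Matrix (Fin 4) (Fin 4) ℝ) (v : Fin 4 → ℝ) :
    ‖M *ᵥ v‖ ≤ opNorm M * ‖v‖ :=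
  (LinearMap.toContinuousLinearMap (Matrix.mulVecLin M)).le_opNorm v

lemma norm_mulVec_mulVec_le_opNorm (A B : Matrix (Fin 4) (Fin 4) ℝ) (v : Fin 4 → ℝ) :
    ‖A *ᵥ (B *ᵥ v)‖ ≤ opNorm A * opNorm B * ‖v‖ := by
  rw [mul_assoc]
  exact (norm_mulVec_le_opNorm _ _).trans
    (mul_le_mul_of_nonneg_left (norm_mulVec_le_opNorm _ _) (opNorm_nonneg _))

lemma continuous_opNorm : Continuous opNorm := by
  have h : opNorm = fun M ↦ ‖(Matrix.toLin'.trans LinearMap.toContinuousLinearMap) M‖ := by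
    ext M; simp [opNorm, Matrix.toLin'_apply']
  rw [h]
  exact (LinearMap.continuous_of_finiteDimensional _).norm

lemma Function.Periodic.bddAbove_range_of_continuous_s13 {f : ℝ → ℝ} {c : ℝ} (hp : Periodic f c)
    (hc : c ≠ 0) (hf : Continuous f) : BddAbove (range f) :=
  (hp.compact_of_continuous hc hf).bddAbove

theorem Continuous.matrix_inv {X R n : Type*} [TopologicalSpace X] [Fintype n] [DecidableEq n]
    [Field R] [TopologicalSpace R] [IsTopologicalRing R] [ContinuousInv₀ R]
    {A : X → Matrix n n R} (hA : Continuous A) (h : ∀ x, (A x).det ≠ 0) :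
    Continuous fun x ↦ (A x)⁻¹ :=
  continuous_iff_continuousAt.2 fun x ↦
    (continuousAt_matrix_inv _ (Ring.inverse_eq_inv' (G₀ := R) ▸ continuousAt_inv₀ (h x))).comp
      hA.continuousAt

theorem Matrix.continuous_of_forall_mulVec_eq {X 𝕜 m n : Type*} [TopologicalSpace X]
    [NontriviallyNormedField 𝕜] [CompleteSpace 𝕜] [Fintype m] [Fintype n] [DecidableEq n]
    {L : X → (n → 𝕜) →L[𝕜] (m → 𝕜)} {M : X → Matrix m n 𝕜} (hL : Continuous L)
    (hM : ∀ x v, L x v = M x *ᵥ v) : Continuous M := by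
  have h : M = fun x ↦ (LinearMap.toMatrix'.toLinearMap ∘ₗ ContinuousLinearMap.coeLM 𝕜) (L x) := by
    ext1 x
    simp only [LinearMap.comp_apply, LinearEquiv.coe_coe, ContinuousLinearMap.coeLM_apply]
    rw [← LinearMap.toMatrix'_toLin' (M x)]
    congr 1
    exact LinearMap.ext fun v ↦ (hM x v).symm
  rw [h]
  exact (LinearMap.continuous_of_finiteDimensional _).comp hL

section Taylor

variable {E G : Type*} [NormedAddCommGroup E] [NormedSpace ℝ E] [NormedAddCommGroup G]
  [NormedSpace ℝ G] {f : E → G}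

theorem Convex.norm_image_add_sub_sub_fderiv_le (hf : Differentiable ℝ f)
    (hf' : Differentiable ℝ (fderiv ℝ f)) {s : Set E} (hs : Convex ℝ s) {M : ℝ}
    (hM : ∀ y ∈ s, ‖fderiv ℝ (fderiv ℝ f) y‖ ≤ M) {x h : E} (hx : x ∈ s) (hxh : x + h ∈ s) :
    ‖f (x + h) - f x - fderiv ℝ f x h‖ ≤ M * ‖h‖ ^ 2 := by
  have hM0 : 0 ≤ M := (norm_nonneg (fderiv ℝ (fderiv ℝ f) x)).trans (hM x hx)
  have hlip : ∀ y ∈ segment ℝ x (x + h), ‖fderiv ℝ f y - fderiv ℝ f x‖ ≤ M * ‖h‖ := by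
    intro y hy
    refine (hs.norm_image_sub_le_of_norm_fderiv_le (fun z _ ↦ hf' z) hM hx
      (hs.segment_subset hx hxh hy)).trans (mul_le_mul_of_nonneg_left ?_ hM0)
    rw [segment_eq_image'] at hy
    obtain ⟨t, ⟨ht0, ht1⟩, rfl⟩ := hy
    rw [add_sub_cancel_left, add_sub_cancel_left, norm_smul, Real.norm_of_nonneg ht0]
    exact mul_le_of_le_one_left (norm_nonneg _) ht1
  have := (convex_segment x (x + h)).norm_image_sub_le_of_norm_fderiv_le' (fun y _ ↦ hf y) hlip
    (left_mem_segment ℝ x (x + h)) (right_mem_segment ℝ x (x + h))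
  rwa [add_sub_cancel_left, mul_assoc, ← sq] at this

theorem ContDiff.exists_norm_image_add_sub_sub_fderiv_le [ProperSpace E] (hf : ContDiff ℝ 2 f)
    {ι : Type*} {x h : ι → E} (hx : IsBounded (range x)) (hh : IsBounded (range h)) :
    ∃ M, 0 ≤ M ∧ ∀ i, ‖f (x i + h i) - f (x i) - fderiv ℝ f (x i) (h i)‖ ≤ M * ‖h i‖ ^ 2 := by
  obtain ⟨a, ha⟩ := hx.exists_norm_le
  obtain ⟨b, hb⟩ := hh.exists_norm_le
  have hf' : ContDiff ℝ 1 (fderiv ℝ f) := hf.fderiv_right le_rfl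
  obtain ⟨M, hM⟩ := (isCompact_closedBall (0 : E) (a + b)).exists_bound_of_continuousOn
    (hf'.continuous_fderiv one_ne_zero).continuousOn
  have hmem : ∀ i, x i ∈ Metric.closedBall (0 : E) (a + b) ∧
      x i + h i ∈ Metric.closedBall (0 : E) (a + b) := fun i ↦ by
    have hxi := ha _ (mem_range_self i)
    have hhi := hb _ (mem_range_self i)
    simp only [mem_closedBall_zero_iff]
    exact ⟨by linarith [norm_nonneg (h i)], (norm_add_le _ _).trans (add_le_add hxi hhi)⟩
  refine ⟨max M 0, le_max_right _ _, fun i ↦ ?_⟩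
  exact (convex_closedBall _ _).norm_image_add_sub_sub_fderiv_le
    (hf.differentiable two_ne_zero) (hf'.differentiable one_ne_zero)
    (fun y hy ↦ (hM y hy).trans (le_max_left _ _)) (hmem i).1 (hmem i).2

end Taylor

theorem Matrix.newton_error_eq {n R : Type*} [Fintype n] [DecidableEq n] [CommRing R]
    {A B D Λ : Matrix n n R} (hB : IsUnit B.det) {fk k' y ξ ξ' : n → R}
    (hξ : -(B⁻¹ *ᵥ (fk - k')) = Λ *ᵥ ξ - ξ') :
    y - (k' + B *ᵥ ξ') = B *ᵥ ((B⁻¹ * D * A - Λ) *ᵥ ξ) + (y - fk - D *ᵥ (A *ᵥ ξ)) := by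
  have hBξ' : B *ᵥ ξ' = B *ᵥ (Λ *ᵥ ξ) + (fk - k') := by
    have := congrArg (B *ᵥ ·) hξ
    rw [mulVec_neg, mulVec_mulVec, mul_nonsing_inv _ hB, one_mulVec, mulVec_sub] at this
    linear_combination (norm := module) this
  have hBEred : B * (B⁻¹ * D * A - Λ) = D * A - B * Λ := by
    rw [Matrix.mul_sub, ← Matrix.mul_assoc, ← Matrix.mul_assoc, mul_nonsing_inv _ hB,
      Matrix.one_mul]
  rw [mulVec_mulVec, hBEred, sub_mulVec, ← mulVec_mulVec, ← mulVec_mulVec, hBξ']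
  abel

lemma ciSup_le_ciSup_mul_ciSup_mul_ciSup_add {ι : Type*} [Nonempty ι] (σ : ι → ι)
    {g p e s : ι → ℝ} {C : ℝ} (hp : BddAbove (range p)) (he : BddAbove (range e))
    (hs : BddAbove (range s)) (hp0 : ∀ i, 0 ≤ p i) (he0 : ∀ i, 0 ≤ e i) (hs0 : ∀ i, 0 ≤ s i)
    (hC : 0 ≤ C) (hg : ∀ i, g i ≤ p (σ i) * e i * s i + C * s i ^ 2) :
    ⨆ i, g i ≤ (⨆ i, p i) * (⨆ i, e i) * (⨆ i, s i) + C * (⨆ i, s i) ^ 2 := by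
  refine ciSup_le fun i ↦ (hg i).trans ?_
  have := hs0 i
  have := he0 i
  have := Real.iSup_nonneg hp0
  have := Real.iSup_nonneg he0
  have := le_ciSup hp (σ i)
  have := le_ciSup he i
  have := le_ciSup hs i
  gcongr

/-- quadratic error reduction of the quasi-Newton step for `K`. If `ξ` solves
`−P(θ+ω)⁻¹E(θ) = Λ(θ)ξ(θ) − ξ(θ+ω)`, then the new invariance error satisfies
`E_new(θ) = P(θ+ω) E_red(θ) ξ(θ) + R(θ)` with `‖R(θ)‖ ≤ C‖ξ(θ)‖²`, and in particular
`sup‖E_new‖ ≤ sup‖P‖ ⋅ sup‖E_red‖ ⋅ sup‖ξ‖ + C sup‖ξ‖²`. -/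
theorem stmt13 (ω : ℝ)
    (F : (Fin 4 → ℝ) → (Fin 4 → ℝ)) (hF : ContDiff ℝ 2 F)
    (K : ℝ → (Fin 4 → ℝ)) (hKc : Continuous K)
    (hKper : Function.Periodic K (2 * Real.pi))
    (DFm : ℝ → Matrix (Fin 4) (Fin 4) ℝ)
    (hDFm : ∀ θ (v : Fin 4 → ℝ), fderiv ℝ F (K θ) v = (DFm θ).mulVec v)
    (P : ℝ → Matrix (Fin 4) (Fin 4) ℝ) (hPc : Continuous P)
    (hPper : Function.Periodic P (2 * Real.pi))
    (hPinv : ∀ θ, IsUnit (P θ).det)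
    (Λ : ℝ → Matrix (Fin 4) (Fin 4) ℝ) (hΛc : Continuous Λ)
    (hΛper : Function.Periodic Λ (2 * Real.pi))
    (E : ℝ → (Fin 4 → ℝ)) (hE : ∀ θ, E θ = F (K θ) - K (θ + ω))
    (Ered : ℝ → Matrix (Fin 4) (Fin 4) ℝ)
    (hEred : ∀ θ, Ered θ = (P (θ + ω))⁻¹ * DFm θ * P θ - Λ θ)
    (ξ : ℝ → (Fin 4 → ℝ)) (hξc : Continuous ξ)
    (hξper : Function.Periodic ξ (2 * Real.pi))
    (hξ : ∀ θ, -((P (θ + ω))⁻¹.mulVec (E θ)) = (Λ θ).mulVec (ξ θ) - ξ (θ + ω))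
    (Enew : ℝ → (Fin 4 → ℝ))
    (hEnew : ∀ θ, Enew θ
      = F (K θ + (P θ).mulVec (ξ θ)) - (K (θ + ω) + (P (θ + ω)).mulVec (ξ (θ + ω)))) :
    ∃ Cb : ℝ, 0 ≤ Cb ∧ ∃ R : ℝ → (Fin 4 → ℝ),
      (∀ θ, Enew θ = (P (θ + ω)).mulVec ((Ered θ).mulVec (ξ θ)) + R θ
        ∧ ‖R θ‖ ≤ Cb * ‖ξ θ‖ ^ 2) ∧
      (⨆ θ : ℝ, ‖Enew θ‖)
        ≤ (⨆ θ : ℝ, opNorm (P θ)) * (⨆ θ : ℝ, opNorm (Ered θ)) * (⨆ θ : ℝ, ‖ξ θ‖)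
          + Cb * (⨆ θ : ℝ, ‖ξ θ‖) ^ 2 := by
  have h2π : 2 * π ≠ 0 := by positivity
  have hDFc : Continuous DFm :=
    Matrix.continuous_of_forall_mulVec_eq ((hF.continuous_fderiv two_ne_zero).comp hKc) hDFm
  have hDFper : Periodic DFm (2 * π) := fun θ ↦
    Matrix.ext_iff_mulVec.2 fun v ↦ by rw [← hDFm, ← hDFm, hKper]
  have hEredc : Continuous Ered := funext hEred ▸
    (((hPc.comp (continuous_add_const ω)).matrix_inv fun θ ↦ (hPinv _).ne_zero).matrix_mul
      hDFc |>.matrix_mul hPc).sub hΛc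
  have hEredper : Periodic Ered (2 * π) := fun θ ↦ by
    rw [hEred, hEred, add_right_comm, hPper, hDFper, hPper, hΛper]
  have hPξper : Periodic (fun θ ↦ P θ *ᵥ ξ θ) (2 * π) := fun θ ↦ by
    simp only [hPper θ, hξper θ]
  obtain ⟨M, hM0, hM⟩ := hF.exists_norm_image_add_sub_sub_fderiv_le
    (hKper.isBounded_of_continuous h2π hKc)
    (hPξper.isBounded_of_continuous h2π (hPc.matrix_mulVec hξc))
  have hPbdd := (hPper.comp opNorm).bddAbove_range_of_continuous_s13 h2π (continuous_opNorm.comp hPc)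
  set sP := ⨆ θ, opNorm (P θ)
  set R := fun θ ↦ F (K θ + P θ *ᵥ ξ θ) - F (K θ) - DFm θ *ᵥ (P θ *ᵥ ξ θ)
  have hR : ∀ θ, ‖R θ‖ ≤ M * sP ^ 2 * ‖ξ θ‖ ^ 2 := fun θ ↦ calc
    ‖R θ‖ ≤ M * ‖P θ *ᵥ ξ θ‖ ^ 2 := by simpa only [hDFm] using hM θ
    _ ≤ M * (sP * ‖ξ θ‖) ^ 2 := by
      gcongr
      exact (norm_mulVec_le_opNorm _ _).trans (by gcongr; exact le_ciSup hPbdd θ)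
    _ = M * sP ^ 2 * ‖ξ θ‖ ^ 2 := by ring
  have hEnew_eq : ∀ θ, Enew θ = P (θ + ω) *ᵥ (Ered θ *ᵥ ξ θ) + R θ := fun θ ↦ by
    rw [hEnew, hEred]
    exact Matrix.newton_error_eq (hPinv _) (hE θ ▸ hξ θ)
  refine ⟨M * sP ^ 2, by positivity, R, fun θ ↦ ⟨hEnew_eq θ, hR θ⟩, ?_⟩
  refine ciSup_le_ciSup_mul_ciSup_mul_ciSup_add (· + ω) hPbdd
    ((hEredper.comp opNorm).bddAbove_range_of_continuous_s13 h2π (continuous_opNorm.comp hEredc))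
    ((hξper.comp (‖·‖)).bddAbove_range_of_continuous_s13 h2π hξc.norm) (fun _ ↦ opNorm_nonneg _)
    (fun _ ↦ opNorm_nonneg _) (fun _ ↦ norm_nonneg _) (by positivity) fun θ ↦ ?_
  rw [hEnew_eq]
  exact (norm_add_le _ _).trans (add_le_add (norm_mulVec_mulVec_le_opNorm _ _ _) (hR θ))
end
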